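/- arXiv:2110.12275 — 2 statements merged into one kernel-verified Lean document; each statement's English description precedes it below -/
import Mathlib

section
/- For every μ ∈ ℝ, σ > 0, and thresholds η₁ < μ < η₂ with (μ − η₁)(η₂ − μ) < σ², there exists a random variable X with mean μ and variance σ² such that Pr(X ≤ η₁ or X ≥ η₂) = 1. -/
open MeasureTheory

lemma my_integrable_dirac {f : ℝ → ℝ} (hf : Measurable f) (a : ℝ) :
    Integrable f (Measure.dirac a) :=
  ⟨hf.aestronglyMeasurable, by simp [HasFiniteIntegral, lintegral_dirac]⟩

theorem two_sided_tail_can_be_one (μ σ η₁ η₂ : ℝ) (hσ : 0 < σ)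
    (h1 : η₁ < μ) (h2 : μ < η₂) (hprod : (μ - η₁) * (η₂ - μ) < σ ^ 2) :
    ∃ P : Measure ℝ, IsProbabilityMeasure P ∧
      Integrable (fun x => x) P ∧ Integrable (fun x => (x - μ) ^ 2) P ∧
      (∫ x, x ∂P) = μ ∧ (∫ x, (x - μ) ^ 2 ∂P) = σ ^ 2 ∧
      (P {x | x ≤ η₁ ∨ η₂ ≤ x}).toReal = 1 := by
  set d : ℝ := η₂ - μ with hd
  have hd0 : 0 < d := by simp [hd]; linarith
  set s : ℝ := σ ^ 2 with hs
  have hs0 : 0 < s := by positivity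
  set D : ℝ := d ^ 2 + s with hD
  have hD0 : 0 < D := by positivity
  set p : ℝ := d ^ 2 / D with hp
  set q : ℝ := s / D with hq
  have hp0 : 0 ≤ p := by positivity
  have hq0 : 0 ≤ q := by positivity
  have hpq : p + q = 1 := by rw [hp, hq]; field_simp; exact hD.symm
  set a : ℝ := μ - s / d with ha
  have ha1 : a ≤ η₁ := by
    have h' : μ - η₁ < s / d := by
      rw [lt_div_iff₀ hd0]; calc (μ - η₁) * d = (μ - η₁) * (η₂ - μ) := by rw [hd]
        _ < s := hprod
    simp only [ha]; linarith
  set P : Measure ℝ := (ENNReal.ofReal p) • Measure.dirac a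
      + (ENNReal.ofReal q) • Measure.dirac η₂ with hP
  have hmeas : ∀ S : Set ℝ, a ∈ S → η₂ ∈ S → P S = 1 := by
    intro S haS hbS
    rw [hP, Measure.add_apply, Measure.smul_apply, Measure.smul_apply,
      Measure.dirac_apply_of_mem haS, Measure.dirac_apply_of_mem hbS]
    simp only [smul_eq_mul, mul_one]
    rw [← ENNReal.ofReal_add hp0 hq0, hpq, ENNReal.ofReal_one]
  have hprob : IsProbabilityMeasure P := ⟨hmeas Set.univ (Set.mem_univ _) (Set.mem_univ _)⟩
  have hint : ∀ f : ℝ → ℝ, Measurable f → Integrable f P := by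
    intro f hf
    exact Integrable.add_measure
      ((my_integrable_dirac hf a).smul_measure ENNReal.ofReal_ne_top)
      ((my_integrable_dirac hf η₂).smul_measure ENNReal.ofReal_ne_top)
  have hintf : ∀ f : ℝ → ℝ, Measurable f → (∫ x, f x ∂P) = p * f a + q * f η₂ := by
    intro f hf
    rw [hP, integral_add_measure
        ((my_integrable_dirac hf a).smul_measure ENNReal.ofReal_ne_top)
        ((my_integrable_dirac hf η₂).smul_measure ENNReal.ofReal_ne_top),
      integral_smul_measure, integral_smul_measure, integral_dirac, integral_dirac,
      ENNReal.toReal_ofReal hp0, ENNReal.toReal_ofReal hq0]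
    simp only [smul_eq_mul]
  refine ⟨P, hprob, hint _ measurable_id, hint _ (by measurability), ?_, ?_, ?_⟩
  · refine (hintf (fun x => x) measurable_id).trans ?_
    have : η₂ = μ + d := by rw [hd]; ring
    rw [ha, this, hp, hq]
    field_simp
    ring
  · refine (hintf (fun x => (x - μ) ^ 2) (by measurability)).trans ?_
    show p * (a - μ) ^ 2 + q * (η₂ - μ) ^ 2 = σ ^ 2
    rw [ha, ← hd, ← hs, hp, hq]
    have : μ - s / d - μ = -(s / d) := by ring
    rw [this]
    field_simp
    ring
  · rw [hmeas _ (Or.inl ha1) (Or.inr le_rfl)]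
    simp
end

section
/- For every μ ∈ ℝ, σ > 0, and μ < η₁ ≤ η₂, there exists a random variable X with mean μ and variance σ² such that Pr(η₁ ≤ X ≤ η₂) = σ² / (σ² + (η₁ − μ)²). -/
open MeasureTheory

lemma int_dirac {f : ℝ → ℝ} {a : ℝ} : Integrable f (Measure.dirac a) := by
  rw [integrable_congr (ae_eq_dirac f)]; exact integrable_const _

theorem interval_bound_tight (μ σ η₁ η₂ : ℝ) (hσ : 0 < σ)
    (h1 : μ < η₁) (h12 : η₁ ≤ η₂) :
    ∃ P : Measure ℝ, IsProbabilityMeasure P ∧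
      Integrable (fun x => x) P ∧ Integrable (fun x => (x - μ) ^ 2) P ∧
      (∫ x, x ∂P) = μ ∧ (∫ x, (x - μ) ^ 2 ∂P) = σ ^ 2 ∧
      (P {x | η₁ ≤ x ∧ x ≤ η₂}).toReal = σ ^ 2 / (σ ^ 2 + (η₁ - μ) ^ 2) := by
  set d : ℝ := η₁ - μ with hd
  have hd0 : 0 < d := sub_pos.mpr h1
  set D : ℝ := σ ^ 2 + d ^ 2 with hD
  have hD0 : 0 < D := by positivity
  set p : ℝ := σ ^ 2 / D with hp
  set q : ℝ := d ^ 2 / D with hq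
  have hp0 : 0 ≤ p := by positivity
  have hq0 : 0 ≤ q := by positivity
  have hpq : p + q = 1 := by rw [hp, hq, ← add_div, ← hD, div_self hD0.ne']
  set y : ℝ := μ - σ ^ 2 / d with hy
  refine ⟨(ENNReal.ofReal p) • Measure.dirac η₁ + (ENNReal.ofReal q) • Measure.dirac y,
    ?_, ?_, ?_, ?_, ?_, ?_⟩
  · constructor
    simp only [Measure.coe_add, Pi.add_apply, Measure.smul_apply, smul_eq_mul,
      Measure.dirac_apply_of_mem (Set.mem_univ _), mul_one,
      ← ENNReal.ofReal_add hp0 hq0, hpq, ENNReal.ofReal_one]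
  · exact ((int_dirac).smul_measure
      ENNReal.ofReal_ne_top).add_measure
      ((int_dirac).smul_measure ENNReal.ofReal_ne_top)
  · exact ((int_dirac).smul_measure
      ENNReal.ofReal_ne_top).add_measure
      ((int_dirac).smul_measure ENNReal.ofReal_ne_top)
  · rw [integral_add_measure
      ((int_dirac).smul_measure ENNReal.ofReal_ne_top)
      ((int_dirac).smul_measure ENNReal.ofReal_ne_top)]
    rw [integral_smul_measure, integral_smul_measure, integral_dirac, integral_dirac,
      ENNReal.toReal_ofReal hp0, ENNReal.toReal_ofReal hq0]
    simp only [smul_eq_mul, hp, hq, hy, hd]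
    have hne : η₁ - μ ≠ 0 := sub_ne_zero.mpr h1.ne'
    have hDne : σ ^ 2 + (η₁ - μ) ^ 2 ≠ 0 := by positivity
    rw [hD, hd]
    field_simp
    ring
  · rw [integral_add_measure
      ((int_dirac).smul_measure ENNReal.ofReal_ne_top)
      ((int_dirac).smul_measure ENNReal.ofReal_ne_top)]
    rw [integral_smul_measure, integral_smul_measure,
      integral_dirac (f := fun x => (x - μ)^2), integral_dirac (f := fun x => (x - μ)^2),
      ENNReal.toReal_ofReal hp0, ENNReal.toReal_ofReal hq0]
    simp only [smul_eq_mul, hp, hq, hy, hd]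
    have : μ - σ ^ 2 / d - μ = -(σ ^ 2 / d) := by ring
    rw [this]
    field_simp
    ring
  · have hS : MeasurableSet {x : ℝ | η₁ ≤ x ∧ x ≤ η₂} :=
      (measurableSet_le measurable_const measurable_id).inter
        (measurableSet_le measurable_id measurable_const)
    have hmem : η₁ ∈ {x : ℝ | η₁ ≤ x ∧ x ≤ η₂} := ⟨le_refl _, h12⟩
    have hymem : y ∉ {x : ℝ | η₁ ≤ x ∧ x ≤ η₂} := by
      intro h
      have hy' : y < μ := by
        have : 0 < σ ^ 2 / d := by positivity
        simp [hy]; linarith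
      exact absurd h.1 (by linarith)
    simp [Measure.dirac_apply' _ hS, hmem, hymem, Set.indicator_of_mem hmem,
      Set.indicator_of_notMem hymem, ENNReal.toReal_ofReal hp0, hp, hD, hd]
    positivity
end
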